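/- (Maximality of the outer factor pointwise in the disk.) Let F and G be bounded analytic operator-valued functions on the unit disk with F outer (in the sense that S(T_F* T_F; {0}) = F_0* F_0) and with F(z)*F(z) = G(z)*G(z) a.e. on the unit circle. Then for every z in the open unit disk, G(z)* G(z) ≤ F(z)* F(z). -/

import Mathlib

/-!
Let `M` be the closure of the range of `T_F` and `S*` the backward shift on `ℓ²`. Outerness makes
`M` invariant under `S*`: if some `p ⊥ M` had `⟪p, S* T_F (δ₀ x)⟫ ≠ 0`, then with
`φ = ⟪p, S* T_F δ₀ ·⟫` the block `F₀* F₀ + φ* φ` would still lie below `T_F* T_F` while exceeding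
the Schur complement `F₀* F₀`.

Since `T_F* T_F = T_G* T_G`, the map `T_F a ↦ T_G a` is isometric, so for the Szegő kernel
`k = (z̄ⁿ y)ₙ` there is `u ∈ M` with `⟪u, T_F w⟫ = ⟪k, T_G w⟫` for all `w` and `‖u‖ ≤ ‖k‖`.
Because `T_F`, `T_G` commute with the shift and `S* k = z̄ k`, the vector `S* u - z̄ u` lies in `M`
and is orthogonal to the range of `T_F`, so it vanishes: `u = (z̄ⁿ y')ₙ` with `‖y'‖ ≤ ‖y‖`. Testing
against `δ₀ x` gives `⟪y, G(z) x⟫ = ⟪y', F(z) x⟫`, i.e. `G(z)* y = F(z)* y'`, and `y = G(z) x`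
yields `‖G(z) x‖ ≤ ‖F(z) x‖`.
-/

open scoped InnerProductSpace
open ContinuousLinearMap

section

variable {H K L : Type*} [NormedAddCommGroup H] [InnerProductSpace ℂ H] [CompleteSpace H]
  [NormedAddCommGroup K] [InnerProductSpace ℂ K] [CompleteSpace K]
  [NormedAddCommGroup L] [InnerProductSpace ℂ L] [CompleteSpace L]

/-- `T` is the (bounded) lower triangular block Toeplitz operator
`T_F = (F_{i-j})_{i,j≥0} : ℓ²_H → ℓ²_K` with symbol coefficients `F_j`; boundedness of
`T` encodes that `F ∈ H^∞_{L(H,K)}(𝔻)`. -/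
def IsToeplitzOf (F : ℕ → H →L[ℂ] K)
    (T : lp (fun _ : ℕ => H) 2 →L[ℂ] lp (fun _ : ℕ => K) 2) : Prop :=
  ∀ (v : lp (fun _ : ℕ => H) 2) (i : ℕ),
    T v i = ∑ j ∈ Finset.range (i + 1), F (i - j) (v j)

/-- The quadratic form of a block matrix supported on `{0,…,k} × {0,…,k}`. -/
noncomputable def schurQF (k : ℕ) (S : ℕ → ℕ → H →L[ℂ] H) (v : ℕ → H) : ℝ :=
  ∑ i ∈ Finset.range (k + 1), ∑ j ∈ Finset.range (k + 1), (⟪S i j (v j), v i⟫_ℂ).re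

/-- `S` is the Schur complement of `T* T` supported on rows and columns `{0,…,k}`:
the maximal positive operator matrix supported there with `T* T - S ≥ 0`. -/
def IsSchurOfTT (T : lp (fun _ : ℕ => H) 2 →L[ℂ] lp (fun _ : ℕ => K) 2) (k : ℕ)
    (S : ℕ → ℕ → H →L[ℂ] H) : Prop :=
  (∀ i j, k < i ∨ k < j → S i j = 0) ∧ (∀ i j, (S i j).adjoint = S j i) ∧
    (∀ v, 0 ≤ schurQF k S v) ∧
    (∀ v : lp (fun _ : ℕ => H) 2, schurQF k S (fun n => v n) ≤ ‖T v‖ ^ 2) ∧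
    ∀ X : ℕ → ℕ → H →L[ℂ] H, (∀ i j, k < i ∨ k < j → X i j = 0) →
      (∀ i j, (X i j).adjoint = X j i) → (∀ v, 0 ≤ schurQF k X v) →
      (∀ v : lp (fun _ : ℕ => H) 2, schurQF k X (fun n => v n) ≤ ‖T v‖ ^ 2) →
      ∀ v, schurQF k X v ≤ schurQF k S v

end

namespace lp

section

variable {α : Type*} {E : α → Type*} [∀ i, NormedAddCommGroup (E i)]

theorem memℓp_two_iff {f : ∀ i, E i} : Memℓp f 2 ↔ Summable fun i => ‖f i‖ ^ 2 := by
  simpa using memℓp_gen_iff (E := E) (p := 2) (by norm_num) (f := f)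

theorem summable_norm_sq (f : lp E 2) : Summable fun i => ‖f i‖ ^ 2 :=
  memℓp_two_iff.1 f.2

theorem norm_sq_eq_tsum (f : lp E 2) : ‖f‖ ^ 2 = ∑' i, ‖f i‖ ^ 2 := by
  simpa using lp.norm_rpow_eq_tsum (p := 2) (by norm_num) f

end

variable {E : Type*} [NormedAddCommGroup E]

def tail (f : lp (fun _ : ℕ => E) 2) : lp (fun _ : ℕ => E) 2 :=
  ⟨fun n => f (n + 1), memℓp_two_iff.2 ((summable_nat_add_iff 1).2 (summable_norm_sq f))⟩

def shift (f : lp (fun _ : ℕ => E) 2) : lp (fun _ : ℕ => E) 2 :=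
  ⟨fun n => Nat.casesOn (motive := fun _ => E) n 0 fun k => f k,
    memℓp_two_iff.2 <| (summable_nat_add_iff 1).1 (summable_norm_sq f)⟩

@[simp] theorem tail_apply (f : lp (fun _ : ℕ => E) 2) (n : ℕ) : tail f n = f (n + 1) := rfl

@[simp] theorem shift_apply_zero (f : lp (fun _ : ℕ => E) 2) : shift f 0 = 0 := rfl

@[simp] theorem shift_apply_succ (f : lp (fun _ : ℕ => E) 2) (n : ℕ) : shift f (n + 1) = f n := rfl

theorem tail_sub (f g : lp (fun _ : ℕ => E) 2) : tail (f - g) = tail f - tail g := rfl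

theorem norm_sq_eq_norm_sq_add_norm_sq_tail (f : lp (fun _ : ℕ => E) 2) :
    ‖f‖ ^ 2 = ‖f 0‖ ^ 2 + ‖tail f‖ ^ 2 := by
  rw [norm_sq_eq_tsum, norm_sq_eq_tsum, (summable_norm_sq f).tsum_eq_zero_add]
  rfl

theorem norm_tail_le (f : lp (fun _ : ℕ => E) 2) : ‖tail f‖ ≤ ‖f‖ := by
  have := norm_sq_eq_norm_sq_add_norm_sq_tail f
  nlinarith [norm_nonneg f, norm_nonneg (tail f), sq_nonneg ‖f 0‖]

theorem lipschitzWith_one_tail : LipschitzWith 1 (tail (E := E)) :=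
  LipschitzWith.of_dist_le_mul fun f g => by
    simpa [dist_eq_norm, ← tail_sub] using norm_tail_le (f - g)

section Inner

variable {𝕜 : Type*} [RCLike 𝕜] [InnerProductSpace 𝕜 E]

theorem inner_tail_left (f g : lp (fun _ : ℕ => E) 2) : ⟪tail f, g⟫_𝕜 = ⟪f, shift g⟫_𝕜 := by
  rw [lp.inner_eq_tsum, lp.inner_eq_tsum,
    (lp.summable_inner (𝕜 := 𝕜) f (shift g)).tsum_eq_zero_add]
  simp

theorem inner_shift_left (f g : lp (fun _ : ℕ => E) 2) : ⟪shift f, g⟫_𝕜 = ⟪f, tail g⟫_𝕜 := by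
  rw [← inner_conj_symm, ← inner_tail_left, inner_conj_symm]

end Inner

end lp

section

variable {𝕜 E : Type*} [RCLike 𝕜] [NormedAddCommGroup E] [NormedSpace 𝕜 E] {z : 𝕜}

theorem summable_norm_sq_star_pow_smul (hz : ‖z‖ < 1) (y : E) :
    Summable fun n : ℕ => ‖star z ^ n • y‖ ^ 2 := by
  simp_rw [norm_smul, norm_pow, norm_star, mul_pow, ← pow_mul, pow_mul']
  exact (summable_geometric_of_lt_one (by positivity) (by nlinarith [norm_nonneg z])).mul_right _

def szegoKernel (hz : ‖z‖ < 1) (y : E) : lp (fun _ : ℕ => E) 2 :=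
  ⟨fun n => star z ^ n • y, lp.memℓp_two_iff.2 (summable_norm_sq_star_pow_smul hz y)⟩

@[simp] theorem szegoKernel_apply (hz : ‖z‖ < 1) (y : E) (n : ℕ) :
    szegoKernel hz y n = star z ^ n • y := rfl

theorem norm_szegoKernel (hz : ‖z‖ < 1) (y : E) :
    ‖szegoKernel hz y‖ = ‖y‖ / √(1 - ‖z‖ ^ 2) := by
  have hz2 : ‖z‖ ^ 2 < 1 := by nlinarith [norm_nonneg z]
  rw [← sq_eq_sq₀ (norm_nonneg _) (by positivity), div_pow, Real.sq_sqrt (by linarith),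
    lp.norm_sq_eq_tsum]
  simp_rw [szegoKernel_apply, norm_smul, norm_pow, norm_star, mul_pow, ← pow_mul, pow_mul',
    tsum_mul_right, tsum_geometric_of_lt_one (by positivity) hz2]
  ring

theorem norm_le_of_norm_szegoKernel_le {E' : Type*} [NormedAddCommGroup E'] [NormedSpace 𝕜 E']
    (hz : ‖z‖ < 1) {y : E} {y' : E'}
    (h : ‖szegoKernel hz y'‖ ≤ ‖szegoKernel hz y‖) : ‖y'‖ ≤ ‖y‖ := by
  have hz2 : 0 < √(1 - ‖z‖ ^ 2) := Real.sqrt_pos.2 (by nlinarith [norm_nonneg z])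
  rwa [norm_szegoKernel, norm_szegoKernel, div_le_div_iff_of_pos_right hz2] at h

theorem tail_szegoKernel (hz : ‖z‖ < 1) (y : E) :
    lp.tail (szegoKernel hz y) = star z • szegoKernel hz y := by
  ext n
  simp [pow_succ', mul_smul]

theorem eq_szegoKernel_of_tail_eq_smul (hz : ‖z‖ < 1) {u : lp (fun _ : ℕ => E) 2}
    (hu : lp.tail u = star z • u) : u = szegoKernel hz (u 0) := by
  ext n
  induction n with
  | zero => simp
  | succ n ih =>
    rw [← lp.tail_apply, hu, lp.coeFn_smul, Pi.smul_apply, ih]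
    simp [pow_succ', mul_smul]

end

section

variable {𝕜 E : Type*} [RCLike 𝕜] [NormedAddCommGroup E] [InnerProductSpace 𝕜 E] {z : 𝕜}

theorem inner_szegoKernel_left (hz : ‖z‖ < 1) (y : E) (f : lp (fun _ : ℕ => E) 2) :
    ⟪szegoKernel hz y, f⟫_𝕜 = ∑' n, z ^ n * ⟪y, f n⟫_𝕜 := by
  rw [lp.inner_eq_tsum]
  simp [inner_smul_left]

end

section Hilbert

variable {𝕜 E F₁ F₂ : Type*} [RCLike 𝕜] [AddCommGroup E] [Module 𝕜 E]
  [NormedAddCommGroup F₁] [InnerProductSpace 𝕜 F₁] [NormedAddCommGroup F₂] [InnerProductSpace 𝕜 F₂]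

theorem eq_zero_of_mem_topologicalClosure_of_inner_eq_zero {K : Submodule 𝕜 F₁} {w : F₁}
    (hw : w ∈ K.topologicalClosure) (h : ∀ v ∈ K, ⟪w, v⟫_𝕜 = 0) : w = 0 := by
  have hw' : w ∈ K.topologicalClosureᗮ := by
    rw [Submodule.orthogonal_closure]
    exact (K.mem_orthogonal' w).2 h
  exact Submodule.disjoint_def.1 K.topologicalClosure.orthogonal_disjoint w hw hw'

theorem exists_mem_closure_range_inner_eq [CompleteSpace F₁] [CompleteSpace F₂]
    (A : E →ₗ[𝕜] F₁) (B : E →ₗ[𝕜] F₂) (hAB : ∀ a b, ⟪A a, A b⟫_𝕜 = ⟪B a, B b⟫_𝕜) (k : F₂) :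
    ∃ u ∈ (LinearMap.range A).topologicalClosure,
      (∀ w, ⟪u, A w⟫_𝕜 = ⟪k, B w⟫_𝕜) ∧ ‖u‖ ≤ ‖k‖ := by
  have hnorm : ∀ a, ‖A a‖ = ‖B a‖ := fun a => by
    rw [← sq_eq_sq₀ (norm_nonneg _) (norm_nonneg _), ← inner_self_eq_norm_sq (𝕜 := 𝕜),
      ← inner_self_eq_norm_sq (𝕜 := 𝕜), hAB]
  set M := (LinearMap.range B).topologicalClosure
  have hq : M.starProjection k ∈ closure (LinearMap.range B : Set F₂) := by
    rw [← Submodule.topologicalClosure_coe]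
    exact M.starProjection_apply_mem k
  obtain ⟨s, hs, hsq⟩ := mem_closure_iff_seq_limit.1 hq
  choose v hv using fun n => LinearMap.mem_range.1 (hs n)
  obtain rfl : (fun n => B (v n)) = s := funext hv
  have hcauchy : CauchySeq fun n => A (v n) := by
    have := hsq.cauchySeq
    rw [Metric.cauchySeq_iff] at this ⊢
    simpa only [dist_eq_norm, ← map_sub, hnorm] using this
  obtain ⟨u, hu⟩ := cauchySeq_tendsto_of_complete hcauchy
  refine ⟨u, ?_, fun w => ?_, ?_⟩
  · exact (Submodule.isClosed_topologicalClosure _).mem_of_tendsto hu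
      (Filter.Eventually.of_forall fun n =>
        Submodule.le_topologicalClosure _ (LinearMap.mem_range_self A (v n)))
  · have hlim : ⟪u, A w⟫_𝕜 = ⟪M.starProjection k, B w⟫_𝕜 :=
      tendsto_nhds_unique (hu.inner tendsto_const_nhds)
        (by simpa only [hAB] using hsq.inner tendsto_const_nhds)
    rw [hlim, eq_comm, ← sub_eq_zero, ← inner_sub_left]
    exact Submodule.inner_left_of_mem_orthogonal
      (Submodule.le_topologicalClosure _ (LinearMap.mem_range_self B w))
      (M.sub_starProjection_mem_orthogonal k)
  · have hlim : ‖u‖ = ‖M.starProjection k‖ :=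
      tendsto_nhds_unique hu.norm (by simpa only [hnorm] using hsq.norm)
    exact hlim ▸ M.norm_starProjection_apply_le k

end Hilbert

section Toeplitz

variable {H K : Type*} [NormedAddCommGroup H] [InnerProductSpace ℂ H]
  [NormedAddCommGroup K] [InnerProductSpace ℂ K]
  {F : ℕ → H →L[ℂ] K} {T : lp (fun _ : ℕ => H) 2 →L[ℂ] lp (fun _ : ℕ => K) 2}

namespace IsToeplitzOf

theorem apply_zero (hT : IsToeplitzOf F T) (v : lp (fun _ : ℕ => H) 2) : T v 0 = F 0 (v 0) := by
  simp [hT v 0]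

theorem apply_single (hT : IsToeplitzOf F T) (x : H) (i : ℕ) : T (lp.single 2 0 x) i = F i x := by
  rw [hT, Finset.sum_eq_single_of_mem 0 (by simp)]
  · simp
  · intro j _ hj
    simp [lp.single_apply, hj]

theorem apply_shift (hT : IsToeplitzOf F T) (v : lp (fun _ : ℕ => H) 2) :
    T (lp.shift v) = lp.shift (T v) := by
  ext i
  cases i with
  | zero => simp [hT.apply_zero]
  | succ i =>
    rw [hT, lp.shift_apply_succ, hT, Finset.sum_range_succ']
    simp

theorem tail_apply (hT : IsToeplitzOf F T) (v : lp (fun _ : ℕ => H) 2) :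
    lp.tail (T v) = lp.tail (T (lp.single 2 0 (v 0))) + T (lp.tail v) := by
  ext n
  rw [lp.tail_apply, hT v (n + 1), Finset.sum_range_succ', lp.coeFn_add, Pi.add_apply,
    lp.tail_apply, hT.apply_single, hT (lp.tail v) n, add_comm]
  simp

theorem norm_le (hT : IsToeplitzOf F T) (i : ℕ) : ‖F i‖ ≤ ‖T‖ :=
  opNorm_le_bound _ (norm_nonneg T) fun x => calc
    ‖F i x‖ = ‖T (lp.single 2 0 x) i‖ := by rw [hT.apply_single]
    _ ≤ ‖T (lp.single 2 0 x)‖ := lp.norm_apply_le_norm (by norm_num) _ i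
    _ ≤ ‖T‖ * ‖x‖ := by simpa [lp.norm_single] using T.le_opNorm (lp.single 2 0 x)

theorem summable_pow_smul [CompleteSpace K] (hT : IsToeplitzOf F T) {z : ℂ} (hz : ‖z‖ < 1) :
    Summable fun j => z ^ j • F j :=
  .of_norm_bounded ((summable_geometric_of_lt_one (norm_nonneg z) hz).mul_right ‖T‖) fun j => by
    rw [norm_smul, norm_pow]
    exact mul_le_mul_of_nonneg_left (hT.norm_le j) (by positivity)

theorem inner_szegoKernel_apply_single [CompleteSpace K] (hT : IsToeplitzOf F T) {z : ℂ}
    (hz : ‖z‖ < 1) (x : H) (y : K) :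
    ⟪szegoKernel hz y, T (lp.single 2 0 x)⟫_ℂ = ⟪y, (∑' j, z ^ j • F j) x⟫_ℂ := by
  have h := ((innerSL ℂ y).comp (apply ℂ K x)).map_tsum (hT.summable_pow_smul hz)
  simp only [comp_apply, innerSL_apply_apply, apply_apply, smul_apply, inner_smul_right] at h
  rw [h, inner_szegoKernel_left]
  simp [hT.apply_single]

end IsToeplitzOf

end Toeplitz

section Outer

variable {H K : Type*} [NormedAddCommGroup H] [InnerProductSpace ℂ H] [CompleteSpace H]
  [NormedAddCommGroup K] [InnerProductSpace ℂ K]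

theorem IsSchurOfTT.re_inner_le_of_isPositive
    {T : lp (fun _ : ℕ => H) 2 →L[ℂ] lp (fun _ : ℕ => K) 2} {S₀ A : H →L[ℂ] H}
    (hS : IsSchurOfTT T 0 fun i j => if i = 0 ∧ j = 0 then S₀ else 0) (hA : A.IsPositive)
    (hAT : ∀ v : lp (fun _ : ℕ => H) 2, (⟪A (v 0), v 0⟫_ℂ).re ≤ ‖T v‖ ^ 2) (x : H) :
    (⟪A x, x⟫_ℂ).re ≤ (⟪S₀ x, x⟫_ℂ).re := by
  have hQF : ∀ (B : H →L[ℂ] H) (v : ℕ → H),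
      schurQF 0 (fun i j => if i = 0 ∧ j = 0 then B else 0) v = (⟪B (v 0), v 0⟫_ℂ).re := by
    simp [schurQF]
  have hadj : ∀ i j,
      (if i = 0 ∧ j = 0 then A else 0).adjoint = if j = 0 ∧ i = 0 then A else 0 := by
    intro i j
    by_cases h : i = 0 ∧ j = 0
    · simp [h, hA.isSelfAdjoint.adjoint_eq]
    · simp [h, show ¬(j = 0 ∧ i = 0) from fun h' => h h'.symm]
  have hmax := hS.2.2.2.2 (fun i j => if i = 0 ∧ j = 0 then A else 0)
    (fun i j hij => if_neg (by omega)) hadj (fun v => (hQF A v).symm ▸ hA.re_inner_nonneg_left _)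
    (fun v => (hQF A _).symm ▸ hAT v) fun _ => x
  simpa only [hQF] using hmax

variable [CompleteSpace K]

def IsOuter (F : ℕ → H →L[ℂ] K) (T : lp (fun _ : ℕ => H) 2 →L[ℂ] lp (fun _ : ℕ => K) 2) : Prop :=
  IsSchurOfTT T 0 fun i j => if i = 0 ∧ j = 0 then (F 0).adjoint ∘L F 0 else 0

namespace IsOuter

variable {F : ℕ → H →L[ℂ] K} {T : lp (fun _ : ℕ => H) 2 →L[ℂ] lp (fun _ : ℕ => K) 2}

theorem inner_tail_apply_single_eq_zero (hT : IsToeplitzOf F T) (hF : IsOuter F T)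
    {p : lp (fun _ : ℕ => K) 2} (hp : p ∈ T.toLinearMap.rangeᗮ) (hp1 : ‖p‖ ≤ 1)
    (x : H) : ⟪p, lp.tail (T (lp.single 2 0 x))⟫_ℂ = 0 := by
  set φ : H →L[ℂ] ℂ :=
    innerSL ℂ (lp.shift p) ∘L T ∘L lp.singleContinuousLinearMap ℂ (fun _ : ℕ => H) 2 0
  have hφ : ∀ y, φ y = ⟪p, lp.tail (T (lp.single 2 0 y))⟫_ℂ := fun y => lp.inner_shift_left _ _
  have hS : ∀ y, (⟪((F 0).adjoint ∘L F 0) y, y⟫_ℂ).re = ‖F 0 y‖ ^ 2 := fun y =>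
    (apply_norm_sq_eq_inner_adjoint_left (F 0) y).symm
  have hre : ∀ y, (⟪((F 0).adjoint ∘L F 0 + φ.adjoint ∘L φ) y, y⟫_ℂ).re
      = ‖F 0 y‖ ^ 2 + ‖φ y‖ ^ 2 := fun y => by
    rw [add_apply, inner_add_left, Complex.add_re, hS, apply_norm_sq_eq_inner_adjoint_left φ]
    rfl
  have hle := IsSchurOfTT.re_inner_le_of_isPositive hF
    ((isPositive_adjoint_comp_self (F 0)).add (isPositive_adjoint_comp_self φ)) (fun v => ?_) x
  · rw [hre, hS] at hle
    rw [← hφ, ← norm_eq_zero, ← sq_eq_zero_iff]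
    exact le_antisymm (by linarith) (sq_nonneg _)
  · have hp0 : ⟪p, T (lp.tail v)⟫_ℂ = 0 :=
      (Submodule.mem_orthogonal' _ p).1 hp _ (LinearMap.mem_range_self _ _)
    have hφv : φ (v 0) = ⟪p, lp.tail (T v)⟫_ℂ := by
      rw [hφ, hT.tail_apply v, inner_add_right, hp0, add_zero]
    have hφle : ‖φ (v 0)‖ ≤ ‖lp.tail (T v)‖ := calc
      ‖φ (v 0)‖ ≤ ‖p‖ * ‖lp.tail (T v)‖ := hφv ▸ norm_inner_le_norm _ _
      _ ≤ ‖lp.tail (T v)‖ := mul_le_of_le_one_left (norm_nonneg _) hp1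
    rw [hre, lp.norm_sq_eq_norm_sq_add_norm_sq_tail (T v), hT.apply_zero]
    gcongr

theorem tail_apply_single_mem (hT : IsToeplitzOf F T) (hF : IsOuter F T) (x : H) :
    lp.tail (T (lp.single 2 0 x)) ∈ T.toLinearMap.range.topologicalClosure := by
  rw [← Submodule.orthogonal_orthogonal_eq_closure, Submodule.mem_orthogonal]
  intro p hp
  set c : ℂ := Complex.ofReal (‖p‖ + 1)⁻¹
  have hc : ‖c • p‖ ≤ 1 := by
    rw [norm_smul, Complex.norm_real, Real.norm_of_nonneg (by positivity),
      inv_mul_le_iff₀ (by positivity)]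
    linarith
  have h := hF.inner_tail_apply_single_eq_zero hT (Submodule.smul_mem _ c hp) hc x
  rw [inner_smul_left, mul_eq_zero] at h
  exact h.resolve_left ((map_ne_zero _).2 (Complex.ofReal_ne_zero.2 (by positivity)))

theorem tail_mem (hT : IsToeplitzOf F T) (hF : IsOuter F T) {w : lp (fun _ : ℕ => K) 2}
    (hw : w ∈ T.toLinearMap.range.topologicalClosure) :
    lp.tail w ∈ T.toLinearMap.range.topologicalClosure := by
  rw [← SetLike.mem_coe, Submodule.topologicalClosure_coe] at hw
  refine (Submodule.isClosed_topologicalClosure _).closure_subset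
    (map_mem_closure lp.lipschitzWith_one_tail.continuous hw ?_)
  rintro _ ⟨v, rfl⟩
  rw [ContinuousLinearMap.coe_coe, hT.tail_apply]
  exact add_mem (hF.tail_apply_single_mem hT _)
    (Submodule.le_topologicalClosure _ (LinearMap.mem_range_self _ _))

variable {L : Type*} [NormedAddCommGroup L] [InnerProductSpace ℂ L] {G : ℕ → H →L[ℂ] L}
  {TF : lp (fun _ : ℕ => H) 2 →L[ℂ] lp (fun _ : ℕ => K) 2}
  {TG : lp (fun _ : ℕ => H) 2 →L[ℂ] lp (fun _ : ℕ => L) 2}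

theorem tail_eq_smul_of_inner_eq (hTF : IsToeplitzOf F TF) (hF : IsOuter F TF)
    (hTG : IsToeplitzOf G TG) {z : ℂ} (hz : ‖z‖ < 1) {y : L} {u : lp (fun _ : ℕ => K) 2}
    (hu : u ∈ TF.toLinearMap.range.topologicalClosure)
    (huy : ∀ w, ⟪u, TF w⟫_ℂ = ⟪szegoKernel hz y, TG w⟫_ℂ) :
    lp.tail u = star z • u := by
  rw [← sub_eq_zero]
  refine eq_zero_of_mem_topologicalClosure_of_inner_eq_zero
    (sub_mem (hF.tail_mem hTF hu) (Submodule.smul_mem _ _ hu)) ?_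
  rintro _ ⟨w, rfl⟩
  rw [ContinuousLinearMap.coe_coe, inner_sub_left, lp.inner_tail_left, ← hTF.apply_shift, huy,
    hTG.apply_shift, ← lp.inner_tail_left, tail_szegoKernel, inner_smul_left, inner_smul_left,
    huy, sub_self]

theorem exists_norm_le_inner_eq [CompleteSpace L] (hTF : IsToeplitzOf F TF) (hF : IsOuter F TF)
    (hTG : IsToeplitzOf G TG) (hgram : ∀ a b, ⟪TF a, TF b⟫_ℂ = ⟪TG a, TG b⟫_ℂ)
    {z : ℂ} (hz : ‖z‖ < 1) (y : L) :
    ∃ y' : K, ‖y'‖ ≤ ‖y‖ ∧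
      ∀ x, ⟪y, (∑' j, z ^ j • G j) x⟫_ℂ = ⟪y', (∑' j, z ^ j • F j) x⟫_ℂ := by
  obtain ⟨u, hu, huy, hnorm⟩ :=
    exists_mem_closure_range_inner_eq TF.toLinearMap TG.toLinearMap hgram (szegoKernel hz y)
  obtain ⟨y', rfl⟩ : ∃ y', u = szegoKernel hz y' :=
    ⟨_, eq_szegoKernel_of_tail_eq_smul hz (hF.tail_eq_smul_of_inner_eq hTF hTG hz hu huy)⟩
  refine ⟨y', norm_le_of_norm_szegoKernel_le hz hnorm, fun x => ?_⟩
  rw [← hTG.inner_szegoKernel_apply_single, ← hTF.inner_szegoKernel_apply_single]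
  exact (huy _).symm

end IsOuter

end Outer

section

variable {H K L : Type*} [NormedAddCommGroup H] [InnerProductSpace ℂ H] [CompleteSpace H]
  [NormedAddCommGroup K] [InnerProductSpace ℂ K] [CompleteSpace K]
  [NormedAddCommGroup L] [InnerProductSpace ℂ L] [CompleteSpace L]

/-- Pointwise maximality of the outer factor in the disk: if `F` is outer and
`F*F = G*G` on the circle (equivalently `T_F* T_F = T_G* T_G`), then
`G(z)* G(z) ≤ F(z)* F(z)` for every `z` in the open unit disk. -/
theorem outer_pointwise_maximal (F : ℕ → H →L[ℂ] K) (G : ℕ → H →L[ℂ] L)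
    (TF : lp (fun _ : ℕ => H) 2 →L[ℂ] lp (fun _ : ℕ => K) 2)
    (TG : lp (fun _ : ℕ => H) 2 →L[ℂ] lp (fun _ : ℕ => L) 2)
    (hTF : IsToeplitzOf F TF) (hTG : IsToeplitzOf G TG)
    (houter : IsSchurOfTT TF 0
      (fun i j => if i = 0 ∧ j = 0 then (F 0).adjoint ∘L F 0 else 0))
    (heq : TF.adjoint ∘L TF = TG.adjoint ∘L TG) :
    ∀ z : ℂ, ‖z‖ < 1 → ∀ x : H,
      ‖(∑' j : ℕ, z ^ j • G j) x‖ ≤ ‖(∑' j : ℕ, z ^ j • F j) x‖ := by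
  intro z hz x
  have hgram : ∀ a b, ⟪TF a, TF b⟫_ℂ = ⟪TG a, TG b⟫_ℂ := fun a b => by
    simpa only [comp_apply, adjoint_inner_left] using congrArg (fun S => ⟪S a, b⟫_ℂ) heq
  set g := (∑' j : ℕ, z ^ j • G j) x
  obtain ⟨y', hy', hrepr⟩ := IsOuter.exists_norm_le_inner_eq hTF houter hTG hgram hz g
  have hg : ‖g‖ * ‖g‖ ≤ ‖g‖ * ‖(∑' j : ℕ, z ^ j • F j) x‖ := calc
    ‖g‖ * ‖g‖ = ‖⟪g, g⟫_ℂ‖ := by rw [← inner_self_re_eq_norm, inner_self_eq_norm_mul_norm]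
    _ = ‖⟪y', (∑' j : ℕ, z ^ j • F j) x⟫_ℂ‖ := by rw [hrepr]
    _ ≤ ‖y'‖ * ‖(∑' j : ℕ, z ^ j • F j) x‖ := norm_inner_le_norm _ _
    _ ≤ ‖g‖ * ‖(∑' j : ℕ, z ^ j • F j) x‖ := by gcongr
  rcases (norm_nonneg g).eq_or_lt with hg0 | hgpos
  · exact hg0 ▸ norm_nonneg _
  · exact le_of_mul_le_mul_left hg hgpos

end
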